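/- Let T be an arbitrary bounded linear operator on H = ℓ²(ℕ, ℂ). If s ∈ ℝ is such that for all t ∈ ℝ one has U_t ∘ exp(isT) ∘ U_{−t} = e^{−ist}·exp(isT), then s = 0. -/

import Mathlib

/-!
Conjugation by `U_t` multiplies the matrix entry `⟨e_n, B e_m⟩` by `e^{i(n-m)t}`, so an operator
with `U_t B U_{-t} = e^{-ist} B` for all `t` can have a nonzero entry only where `n - m + s = 0`.
If `B` is invertible its column `B e_0` is nonzero, which forces `s = -n ≤ 0`; and `B⁻¹` satisfies
the same relation with `-s`, which forces `s ≥ 0`. Apply this to the invertible `B = exp(isT)`.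
-/

noncomputable section

open Complex
open scoped ENNReal NNReal

namespace GW

/-- The Hilbert space `H = ℓ²(ℕ, ℂ)`. -/
abbrev H : Type := lp (fun _ : ℕ => ℂ) 2

/-- The domain of the number operator: `{f ∈ H : Σ n² |c_n|² < ∞}`. -/
def domN : Set H := {f : H | Summable fun n : ℕ => (n : ℝ) ^ 2 * ‖f n‖ ^ 2}

lemma Nop_memℓp {f : H} (hf : f ∈ domN) : Memℓp (fun n : ℕ => (n : ℂ) * f n) 2 := by
  apply memℓp_gen
  refine Summable.congr hf fun n => ?_
  have h2 : ((2 : ℝ≥0∞)).toReal = ((2 : ℕ) : ℝ) := by norm_num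
  rw [h2, Real.rpow_natCast]
  simp [norm_mul, mul_pow]

/-- The number operator `N`, defined on its maximal domain `domN`: `(Nf)_n = n·c_n`. -/
def Nop (f : H) (hf : f ∈ domN) : H := ⟨fun n : ℕ => (n : ℂ) * f n, Nop_memℓp hf⟩

/-- The standard orthonormal basis `(e_n)` of `H`. -/
def eH (n : ℕ) : H := lp.single 2 n (1 : ℂ)

lemma norm_exp_mul (x : ℝ) (c : ℂ) : ‖Complex.exp ((x : ℂ) * Complex.I) * c‖ = ‖c‖ := by
  rw [norm_mul, Complex.norm_exp_ofReal_mul_I, one_mul]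

lemma U_memℓp (t : ℝ) (f : H) : Memℓp (fun n : ℕ => Complex.exp (((n * t : ℝ) : ℂ) * Complex.I) * f n) 2 := by
  apply memℓp_gen
  refine Summable.congr ((lp.memℓp f).summable (by norm_num)) fun n => ?_
  rw [norm_exp_mul]

/-- The unitary group `U_t = e^{itN}`: `(U_t f)_n = e^{int} f_n`, as a linear map. -/
def Ulin (t : ℝ) : H →ₗ[ℂ] H where
  toFun f := ⟨fun n : ℕ => Complex.exp (((n * t : ℝ) : ℂ) * Complex.I) * f n, U_memℓp t f⟩
  map_add' f g := by
    apply Subtype.ext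
    funext n
    show Complex.exp _ * (⇑(f + g)) n = _
    rw [lp.coeFn_add]
    show Complex.exp _ * (f n + g n) =
      Complex.exp _ * f n + Complex.exp _ * g n
    ring
  map_smul' c f := by
    apply Subtype.ext
    funext n
    show Complex.exp _ * (⇑(c • f)) n = _
    rw [lp.coeFn_smul]
    show Complex.exp _ * (c * f n) = c * (Complex.exp _ * f n)
    ring

/-- The unitary group `U_t = e^{itN}`: `(U_t f)_n = e^{int} f_n`. -/
def U (t : ℝ) : H →L[ℂ] H :=
  LinearMap.mkContinuousOfExistsBound (Ulin t)
    ⟨1, fun f => by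
      simp only [Ulin, LinearMap.coe_mk, AddHom.coe_mk, one_mul]
      apply le_of_eq
      rw [lp.norm_eq_tsum_rpow (by norm_num : 0 < (2 : ℝ≥0∞).toReal),
        lp.norm_eq_tsum_rpow (by norm_num : 0 < (2 : ℝ≥0∞).toReal) f]
      congr 1
      refine tsum_congr fun n => ?_
      show ‖Complex.exp (((n * t : ℝ) : ℂ) * Complex.I) * f n‖ ^ (2 : ℝ≥0∞).toReal = _
      rw [norm_exp_mul]⟩

lemma ContinuousLinearMap.units_apply_ne_zero {R M : Type*} [Semiring R] [TopologicalSpace M]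
    [AddCommMonoid M] [Module R M] (A : (M →L[R] M)ˣ) {x : M} (hx : x ≠ 0) :
    (A : M →L[R] M) x ≠ 0 := by
  simpa using (ContinuousLinearEquiv.unitsEquiv R M A).map_ne_zero_iff.mpr hx

theorem Units.conj_inv_eq_inv_smul {𝕜 R : Type*} [Field 𝕜] [Ring R] [Algebra 𝕜 R] {v w : R}
    (hvw : v * w = 1) (hwv : w * v = 1) (a : Rˣ) {c : 𝕜} (hc : c ≠ 0)
    (h : v * (a * w) = c • a) : v * (↑a⁻¹ * w) = c⁻¹ • ↑a⁻¹ := by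
  have hunit : (c • (a : R)) * (c⁻¹ • ↑a⁻¹) = 1 := by
    rw [smul_mul_smul_comm, mul_inv_cancel₀ hc, Units.mul_inv, one_smul]
  calc v * (↑a⁻¹ * w) = v * (↑a⁻¹ * w) * ((c • (a : R)) * (c⁻¹ • ↑a⁻¹)) := by
        rw [hunit, mul_one]
    _ = v * (↑a⁻¹ * (w * v) * a) * w * (c⁻¹ • ↑a⁻¹) := by rw [← h]; noncomm_ring
    _ = c⁻¹ • ↑a⁻¹ := by rw [hwv, mul_one, Units.inv_mul, mul_one, hvw, one_mul]

theorem Complex.eq_zero_of_forall_exp_mul_I_eq_one {r : ℝ}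
    (h : ∀ t : ℝ, Complex.exp (((r * t : ℝ) : ℂ) * Complex.I) = 1) : r = 0 := by
  by_contra hr
  have := h (Real.pi / r)
  rw [mul_div_cancel₀ _ hr, Complex.exp_pi_mul_I] at this
  norm_num at this

lemma U_apply (t : ℝ) (f : H) (n : ℕ) :
    U t f n = Complex.exp (((n * t : ℝ) : ℂ) * Complex.I) * f n := rfl

lemma U_add (t₁ t₂ : ℝ) : U (t₁ + t₂) = U t₁ * U t₂ := by
  ext f n
  change U (t₁ + t₂) f n = U t₁ (U t₂ f) n
  rw [U_apply, U_apply, U_apply, ← mul_assoc, ← Complex.exp_add]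
  push_cast
  ring_nf

lemma U_zero : U 0 = 1 := by
  ext f n
  simp [U_apply]

lemma U_mul_U_neg (t : ℝ) : U t * U (-t) = 1 := by
  rw [← U_add, add_neg_cancel, U_zero]

lemma U_eH (t : ℝ) (m : ℕ) :
    U t (eH m) = Complex.exp (((m * t : ℝ) : ℂ) * Complex.I) • eH m := by
  ext n
  rw [U_apply, lp.coeFn_smul, Pi.smul_apply, smul_eq_mul]
  rcases eq_or_ne n m with rfl | hnm
  · rfl
  · rw [show eH m n = 0 from lp.single_apply_ne 2 m _ hnm, mul_zero, mul_zero]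

lemma eH_ne_zero (m : ℕ) : eH m ≠ 0 := by
  simp [← norm_ne_zero_iff, eH, lp.norm_single]

def SatisfiesWeylRelation (s : ℝ) (B : H →L[ℂ] H) : Prop :=
  ∀ t : ℝ, (U t) ∘L B ∘L (U (-t)) = Complex.exp (-(Complex.I * (s : ℂ) * (t : ℂ))) • B

lemma conj_U_apply_eH (B : H →L[ℂ] H) (t : ℝ) (m n : ℕ) :
    ((U t) ∘L B ∘L (U (-t))) (eH m) n =
      Complex.exp ((((n - m : ℝ) * t : ℝ) : ℂ) * Complex.I) * B (eH m) n := by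
  rw [ContinuousLinearMap.comp_apply, ContinuousLinearMap.comp_apply, U_eH, map_smul, map_smul,
    lp.coeFn_smul, Pi.smul_apply, smul_eq_mul, U_apply, ← mul_assoc, ← Complex.exp_add]
  push_cast
  ring_nf

namespace SatisfiesWeylRelation

variable {s : ℝ} {B : H →L[ℂ] H}

lemma sub_add_eq_zero_of_apply_ne_zero (h : SatisfiesWeylRelation s B) {m n : ℕ}
    (hnm : B (eH m) n ≠ 0) : (n - m + s : ℝ) = 0 := by
  refine Complex.eq_zero_of_forall_exp_mul_I_eq_one fun t => ?_
  have hphase : Complex.exp ((((n - m : ℝ) * t : ℝ) : ℂ) * Complex.I) =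
      Complex.exp (-(Complex.I * s * t)) := by
    have hcoord := congr($(h t) (eH m) n)
    rw [conj_U_apply_eH, smul_apply, lp.coeFn_smul, Pi.smul_apply, smul_eq_mul] at hcoord
    exact mul_right_cancel₀ hnm hcoord
  calc Complex.exp ((((n - m + s : ℝ) * t : ℝ) : ℂ) * Complex.I)
      = Complex.exp ((((n - m : ℝ) * t : ℝ) : ℂ) * Complex.I) *
          Complex.exp (Complex.I * s * t) := by
        rw [← Complex.exp_add]; push_cast; ring_nf
    _ = 1 := by rw [hphase, ← Complex.exp_add, neg_add_cancel, Complex.exp_zero]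

lemma nonpos_of_apply_eH_zero_ne_zero (h : SatisfiesWeylRelation s B) (hB : B (eH 0) ≠ 0) :
    s ≤ 0 := by
  obtain ⟨n, hn⟩ : ∃ n, B (eH 0) n ≠ 0 := by
    by_contra! hzero
    exact hB (lp.ext (funext hzero))
  have := h.sub_add_eq_zero_of_apply_ne_zero hn
  push_cast at this
  linarith [n.cast_nonneg (α := ℝ)]

lemma inv {A : (H →L[ℂ] H)ˣ} (h : SatisfiesWeylRelation s A) :
    SatisfiesWeylRelation (-s) ↑A⁻¹ := by
  intro t
  have hphase : Complex.exp (-(Complex.I * (-s : ℝ) * t)) =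
      (Complex.exp (-(Complex.I * s * t)))⁻¹ := by
    rw [← Complex.exp_neg]; push_cast; ring_nf
  rw [hphase]
  exact Units.conj_inv_eq_inv_smul (U_mul_U_neg t) (by simpa using U_mul_U_neg (-t)) A
    (Complex.exp_ne_zero _) (h t)

end SatisfiesWeylRelation

/-- Let `T` be an arbitrary bounded operator on `H = ℓ²(ℕ,ℂ)`. If `s ∈ ℝ` is
such that for all `t ∈ ℝ` one has `U_t ∘ exp(isT) ∘ U_{−t} = e^{−ist}·exp(isT)`, then `s = 0`. -/
theorem weyl_relation_fails_bounded (T : H →L[ℂ] H) (s : ℝ)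
    (h : ∀ t : ℝ,
      (U t) ∘L (NormedSpace.exp ((Complex.I * (s : ℂ)) • T)) ∘L (U (-t)) =
        Complex.exp (-(Complex.I * (s : ℂ) * (t : ℂ))) •
          NormedSpace.exp ((Complex.I * (s : ℂ)) • T)) :
    s = 0 := by
  obtain ⟨A, hexp⟩ : IsUnit (NormedSpace.exp ((Complex.I * (s : ℂ)) • T)) := by
    let : NormedAlgebra ℚ (H →L[ℂ] H) := .restrictScalars ℚ ℂ _
    exact NormedSpace.isUnit_exp _
  have hA : SatisfiesWeylRelation s A := hexp ▸ h
  have hcol (B : (H →L[ℂ] H)ˣ) : (B : H →L[ℂ] H) (eH 0) ≠ 0 :=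
    ContinuousLinearMap.units_apply_ne_zero B (eH_ne_zero 0)
  linarith [hA.nonpos_of_apply_eH_zero_ne_zero (hcol A),
    hA.inv.nonpos_of_apply_eH_zero_ne_zero (hcol A⁻¹)]

end GW
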